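/- For all integers n, r ≥ 2, dim C_r(N_n) ≥ (r+1)·⌊n²/4⌋. -/

import Mathlib

open MvPolynomial Matrix TopologicalSpace

/-- The Zariski topology on `r`-tuples of `n × n` matrices over `k`, identified with
affine space `k^(r·n²)`: the topology generated by complements of hypersurfaces
(its closed sets are exactly the common zero loci of families of polynomials in the
matrix entries). -/
noncomputable def matTupleZariski (k : Type*) [CommRing k] (n r : ℕ) :
    TopologicalSpace (Fin r → Matrix (Fin n) (Fin n) k) :=
  TopologicalSpace.generateFrom
    {U | ∃ p : MvPolynomial (Fin r × Fin n × Fin n) k,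
      U = {x | MvPolynomial.eval (fun q => x q.1 q.2.1 q.2.2) p ≠ 0}}

/-- `C_r(N_n)`: the set of commuting `r`-tuples of nilpotent `n × n` matrices. -/
def nilCommTuples (k : Type*) [Field k] (n r : ℕ) :
    Set (Fin r → Matrix (Fin n) (Fin n) k) :=
  {x | (∀ i, IsNilpotent (x i)) ∧ ∀ i j, x i * x j = x j * x i}

/-!
Write `n = p + q` with `q ≤ p` and `p q = ⌊n²/4⌋`. For `E ∈ k^{q×p}` and `B_1, …, B_r ∈ k^{p×q}`,
conjugate the block matrices `N_i = [[0, B_i + J], [0, 0]]` (`J` the `p × q` matrix with ones on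
the diagonal) by the unipotent matrix `[[1, 0], [E, 1]]`. Since `N_i N_j = 0`, this is a
polynomial family of commuting nilpotent `r`-tuples with `(r + 1) p q` parameters. Order the
parameters with the entries of `E` first. As long as all later parameters vanish, each parameter
is a polynomial in the entries of the tuple (the entries of `E` appear in the upper-left block
`-J E` of the first matrix), so the closures of the images of the coordinate flag form a strictly
increasing chain of irreducible closed subsets of length `(r + 1) p q`.
-/

open scoped Topology

namespace MvPolynomial

variable (σ k : Type*) [CommRing k]

def affineZariski : TopologicalSpace (σ → k) :=
  generateFrom (Set.range fun p : MvPolynomial σ k => {x | eval x p ≠ 0})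

end MvPolynomial

attribute [local instance] MvPolynomial.affineZariski

namespace MvPolynomial

variable {σ k : Type*} [CommRing k]

lemma isTopologicalBasis_affineZariski [IsDomain k] :
    IsTopologicalBasis (Set.range fun p : MvPolynomial σ k => {x | eval x p ≠ 0}) where
  exists_subset_inter := by
    rintro _ ⟨p, rfl⟩ _ ⟨q, rfl⟩ x hx
    exact ⟨_, ⟨p * q, rfl⟩, by simpa using hx, fun y hy => by simpa using hy⟩
  sUnion_eq := Set.sUnion_eq_univ_iff.2 fun _ => ⟨_, ⟨1, rfl⟩, by simp⟩
  eq_generateFrom := rfl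

lemma isClosed_setOf_eval_eq_zero (p : MvPolynomial σ k) :
    IsClosed {x : σ → k | eval x p = 0} :=
  isOpen_compl_iff.1 (GenerateOpen.basic _ ⟨p, by ext; simp⟩)

lemma continuous_polynomialMap {τ : Type*} (F : τ → MvPolynomial σ k) :
    Continuous fun (x : σ → k) (t : τ) => eval x (F t) := by
  refine continuous_generateFrom_iff.2 ?_
  rintro _ ⟨p, rfl⟩
  refine GenerateOpen.basic _ ⟨bind₁ F p, ?_⟩
  ext x
  exact Iff.of_eq (congrArg (· ≠ (0 : k)) (eval₂Hom_bind₁ (RingHom.id k) x F p))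

lemma irreducibleSpace_affineZariski [IsDomain k] [Infinite k] :
    IrreducibleSpace (σ → k) := by
  refine { isPreirreducible_univ := ?_, toNonempty := ⟨fun _ => 0⟩ }
  rintro u v hu hv ⟨x, -, hxu⟩ ⟨y, -, hyv⟩
  obtain ⟨_, ⟨p, rfl⟩, hxp, hpu⟩ :=
    isTopologicalBasis_affineZariski.exists_subset_of_mem_open hxu hu
  obtain ⟨_, ⟨q, rfl⟩, hyq, hqv⟩ :=
    isTopologicalBasis_affineZariski.exists_subset_of_mem_open hyv hv
  have hpq : p * q ≠ 0 := mul_ne_zero (fun h => hxp (by simp [h])) (fun h => hyq (by simp [h]))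
  obtain ⟨z, hz⟩ : ∃ z, eval z (p * q) ≠ 0 := by
    by_contra! h
    exact hpq (MvPolynomial.funext fun z => by simp [h z])
  rw [map_mul] at hz
  exact ⟨z, trivial, hpu (left_ne_zero_of_mul hz), hqv (right_ne_zero_of_mul hz)⟩

end MvPolynomial

section Truncation

variable {k : Type*} [CommRing k] {m : ℕ}

def truncate (l : ℕ) (v : Fin m → k) : Fin m → k := fun j => if (j : ℕ) < l then v j else 0

lemma continuous_truncate (l : ℕ) : Continuous (truncate (k := k) (m := m) l) := by
  convert continuous_polynomialMap fun j : Fin m =>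
    if (j : ℕ) < l then X j else (0 : MvPolynomial (Fin m) k) using 1
  funext v j
  simp only [truncate, apply_ite (eval v), eval_X, map_zero]

lemma truncate_of_le {l : ℕ} {j : Fin m} (h : l ≤ j) (v : Fin m → k) : truncate l v j = 0 :=
  if_neg h.not_gt

lemma truncate_truncate {l l' : ℕ} (h : l ≤ l') (v : Fin m → k) :
    truncate l' (truncate l v) = truncate l v := by
  funext j
  simp only [truncate]
  split_ifs <;> first | rfl | omega

end Truncation

theorem le_topologicalKrullDim_of_triangular {k X : Type*} [CommRing k] [IsDomain k] [Infinite k]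
    [TopologicalSpace X] {m : ℕ} {φ : (Fin m → k) → X} (hφ : Continuous φ)
    (g : Fin m → X → k) (hg : ∀ l, IsClosed {x | g l x = 0})
    (hφg : ∀ l v, (∀ j, l < j → v j = 0) → g l (φ v) = v l) :
    (m : WithBot ℕ∞) ≤ topologicalKrullDim X := by
  have := MvPolynomial.irreducibleSpace_affineZariski (σ := Fin m) (k := k)
  let Z : ℕ → IrreducibleCloseds X := fun l =>
    ⟨closure (Set.range (φ ∘ truncate l)),
      (Set.image_univ ▸ (IrreducibleSpace.isIrreducible_univ _).image _
        (hφ.comp (continuous_truncate l)).continuousOn).closure, isClosed_closure⟩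
  have Z_mono {l l'} (h : l ≤ l') : Z l ≤ Z l' := by
    refine closure_mono ?_
    rintro _ ⟨v, rfl⟩
    exact ⟨truncate l v, by simp [truncate_truncate h]⟩
  have Z_lt (l : Fin m) : Z l < Z (l + 1) := by
    refine lt_of_le_of_ne (Z_mono l.val.le_succ) fun hZ => ?_
    have hZ_zero : (Z l : Set X) ⊆ {x | g l x = 0} := by
      refine closure_minimal ?_ (hg l)
      rintro _ ⟨v, rfl⟩
      rw [Set.mem_ofPred_eq, Function.comp_apply,
        hφg l _ fun j hj => truncate_of_le (Fin.lt_def.1 hj).le v]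
      exact truncate_of_le le_rfl v
    have hmem : φ (truncate (l + 1) (Pi.single l 1)) ∈ Z (l + 1) := subset_closure ⟨_, rfl⟩
    have hg_one := hZ_zero (hZ ▸ hmem)
    rw [Set.mem_ofPred_eq, hφg l _ fun j hj => truncate_of_le (Fin.lt_def.1 hj) _] at hg_one
    simp [truncate] at hg_one
  exact Order.LTSeries.length_le_krullDim ⟨m, fun l => Z l, fun l => Z_lt l⟩

lemma matTupleZariski_eq_induced (k : Type*) [CommRing k] (n r : ℕ) :
    matTupleZariski k n r =
      (affineZariski (Fin r × Fin n × Fin n) k).induced fun x t => x t.1 t.2.1 t.2.2 := by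
  rw [affineZariski, induced_generateFrom_eq, ← Set.range_comp, matTupleZariski]
  congr 1
  ext U
  simp [eq_comm]

lemma continuous_matTupleCoords (k : Type*) [CommRing k] (n r : ℕ) :
    Continuous[matTupleZariski k n r, _]
      fun (x : Fin r → Matrix (Fin n) (Fin n) k) (t : Fin r × Fin n × Fin n) =>
        x t.1 t.2.1 t.2.2 := by
  rw [matTupleZariski_eq_induced]
  exact continuous_induced_dom

lemma mem_nilCommTuples_of_mul_eq_zero {k : Type*} [Field k] {n r : ℕ}
    {x : Fin r → Matrix (Fin n) (Fin n) k} (hx : ∀ i j, x i * x j = 0) :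
    x ∈ nilCommTuples k n r :=
  ⟨fun i => ⟨2, by rw [sq, hx]⟩, fun i j => by rw [hx, hx]⟩

lemma finProdFinEquiv_lt_of_fst_lt {m n : ℕ} {x y : Fin m × Fin n} (h : x.1 < y.1) :
    finProdFinEquiv x < finProdFinEquiv y := by
  rw [Fin.lt_def] at h ⊢
  simp only [finProdFinEquiv_apply_val]
  nlinarith [x.2.2, y.2.2]

namespace NilCommTuples

variable {R : Type*} [CommRing R] {p q r : ℕ}

def rectOne (p q : ℕ) : Matrix (Fin p) (Fin q) R := of fun a c => if (a : ℕ) = c then 1 else 0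

lemma rectOne_mul_apply_castLE (h : q ≤ p) {m : Type*} (M : Matrix (Fin q) m R) (c : Fin q)
    (b : m) : ((rectOne p q : Matrix (Fin p) (Fin q) R) * M) (Fin.castLE h c) b = M c b := by
  rw [Matrix.mul_apply]
  simp [rectOne, Fin.val_eq_val]

def lowerUnitriangular (E : Matrix (Fin q) (Fin p) R) :
    Matrix (Fin p ⊕ Fin q) (Fin p ⊕ Fin q) R :=
  fromBlocks 1 0 E 1

def upperBlock (B : Matrix (Fin p) (Fin q) R) : Matrix (Fin p ⊕ Fin q) (Fin p ⊕ Fin q) R :=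
  fromBlocks 0 B 0 0

lemma lowerUnitriangular_neg_mul (E : Matrix (Fin q) (Fin p) R) :
    lowerUnitriangular (-E) * lowerUnitriangular E = 1 := by
  simp [lowerUnitriangular, fromBlocks_multiply, fromBlocks_one]

lemma upperBlock_mul_upperBlock (B B' : Matrix (Fin p) (Fin q) R) :
    upperBlock B * upperBlock B' = 0 := by
  simp [upperBlock, fromBlocks_multiply, fromBlocks_zero]

/-- The parameters are `E = (v 0)ᵀ` and `B_i = v i.succ`; the shift by `rectOne` makes `E` visible
in the upper-left block (`conjTuple_apply_castAdd_castAdd`). -/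
def conjTuple (v : Fin (r + 1) → Matrix (Fin p) (Fin q) R) (i : Fin r) :
    Matrix (Fin (p + q)) (Fin (p + q)) R :=
  reindex finSumFinEquiv finSumFinEquiv
    (lowerUnitriangular (v 0)ᵀ * upperBlock (v i.succ + rectOne p q) *
      lowerUnitriangular (-(v 0)ᵀ))

lemma conjTuple_mul_conjTuple (v : Fin (r + 1) → Matrix (Fin p) (Fin q) R) (i j : Fin r) :
    conjTuple v i * conjTuple v j = 0 := by
  have hconj : ∀ (P P' N N' : Matrix (Fin p ⊕ Fin q) (Fin p ⊕ Fin q) R), P' * P = 1 →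
      P * N * P' * (P * N' * P') = P * (N * N') * P' := by
    intro P P' N N' h
    simp only [mul_assoc, ← mul_assoc P' P, h, one_mul]
  simp only [conjTuple, ← coe_reindexAlgEquiv (R := R), ← map_mul,
    hconj _ _ _ _ (lowerUnitriangular_neg_mul _), upperBlock_mul_upperBlock, mul_zero, zero_mul,
    map_zero]

lemma conjTuple_map {S : Type*} [CommRing S] (f : R →+* S)
    (v : Fin (r + 1) → Matrix (Fin p) (Fin q) R) (i : Fin r) :
    conjTuple (fun t => (v t).map f) i = (conjTuple v i).map f := by
  have hJ : (rectOne p q : Matrix (Fin p) (Fin q) R).map f = rectOne p q := by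
    ext; simp [rectOne]
  simp [conjTuple, reindex_apply, ← submatrix_map, Matrix.map_mul, lowerUnitriangular, upperBlock,
    fromBlocks_map, transpose_map, Matrix.map_add _ (map_add f), Matrix.map_neg _ (map_neg f), hJ]

lemma conjTuple_apply_castAdd_natAdd (v : Fin (r + 1) → Matrix (Fin p) (Fin q) R) (i : Fin r)
    (a : Fin p) (c : Fin q) :
    conjTuple v i (Fin.castAdd q a) (Fin.natAdd p c) = v i.succ a c + rectOne p q a c := by
  simp [conjTuple, lowerUnitriangular, upperBlock, fromBlocks_multiply,
    ← finSumFinEquiv_apply_left]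

lemma conjTuple_apply_castAdd_castAdd (v : Fin (r + 1) → Matrix (Fin p) (Fin q) R) (i : Fin r)
    (a b : Fin p) :
    conjTuple v i (Fin.castAdd q a) (Fin.castAdd q b) =
      -((v i.succ + rectOne p q) * (v 0)ᵀ : Matrix (Fin p) (Fin p) R) a b := by
  simp [conjTuple, lowerUnitriangular, upperBlock, fromBlocks_multiply,
    ← finSumFinEquiv_apply_left]

def unflatten (w : Fin ((r + 1) * (p * q)) → R) (t : Fin (r + 1)) : Matrix (Fin p) (Fin q) R :=
  of fun a c => w (finProdFinEquiv (t, finProdFinEquiv (a, c)))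

variable (k : Type*) [Field k]

lemma continuous_conjTuple_unflatten :
    Continuous[_, matTupleZariski k (p + q) r] fun w : Fin ((r + 1) * (p * q)) → k =>
      fun i => conjTuple (unflatten w) i := by
  rw [matTupleZariski_eq_induced, continuous_induced_rng]
  convert continuous_polynomialMap fun t : Fin r × Fin (p + q) × Fin (p + q) =>
    conjTuple (unflatten X) t.1 t.2.1 t.2.2 using 1
  funext w t
  have hw : unflatten w = fun s => (unflatten X s).map (eval w) := by
    ext; simp [unflatten]
  simp [hw, conjTuple_map]

/-- Recovers the parameter `l` of `conjTuple (unflatten w)` as a polynomial in the entries of the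
tuple; in the `t = 0` block (the entries of `E`) only when the `B`-parameters vanish, which is why
that block comes first in the order of `finProdFinEquiv`. -/
noncomputable def readout (hqp : q ≤ p) (i₀ : Fin r) (l : Fin ((r + 1) * (p * q))) :
    MvPolynomial (Fin r × Fin (p + q) × Fin (p + q)) k :=
  let a := (finProdFinEquiv.symm (finProdFinEquiv.symm l).2).1
  let c := (finProdFinEquiv.symm (finProdFinEquiv.symm l).2).2
  Fin.cases (-X (i₀, Fin.castAdd q (Fin.castLE hqp c), Fin.castAdd q a))
    (fun s => X (s, Fin.castAdd q a, Fin.natAdd p c) - C (rectOne p q a c))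
    (finProdFinEquiv.symm l).1

end NilCommTuples

open NilCommTuples in
theorem le_topologicalKrullDim_nilCommTuples (k : Type*) [Field k] [Infinite k] {p q r : ℕ}
    (hqp : q ≤ p) (hr : 0 < r) :
    letI := matTupleZariski k (p + q) r
    (((r + 1) * (p * q) : ℕ) : WithBot ℕ∞) ≤
      topologicalKrullDim (nilCommTuples k (p + q) r) := by
  let := matTupleZariski k (p + q) r
  refine le_topologicalKrullDim_of_triangular
    (φ := fun w => ⟨fun i => conjTuple (unflatten w) i,
      mem_nilCommTuples_of_mul_eq_zero (conjTuple_mul_conjTuple _)⟩)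
    ((continuous_conjTuple_unflatten k).subtype_mk _)
    (fun l x => eval (fun t => x.1 t.1 t.2.1 t.2.2) (readout k hqp ⟨0, hr⟩ l)) (fun l => ?_) ?_
  · exact (isClosed_setOf_eval_eq_zero _).preimage
      ((continuous_matTupleCoords k _ r).comp continuous_subtype_val)
  intro l w hw
  obtain ⟨⟨t, y⟩, rfl⟩ := finProdFinEquiv.surjective l
  obtain ⟨⟨a, c⟩, rfl⟩ := finProdFinEquiv.surjective y
  cases t using Fin.cases with
  | zero =>
    have hB (s : Fin r) : unflatten w s.succ = 0 := by
      ext a' c'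
      exact hw _ (finProdFinEquiv_lt_of_fst_lt (Fin.succ_pos s))
    simp only [readout, Equiv.symm_apply_apply, Fin.cases_zero, eval_neg, eval_X,
      conjTuple_apply_castAdd_castAdd, hB, zero_add, rectOne_mul_apply_castLE, neg_neg]
    rfl
  | succ s =>
    simp only [readout, Equiv.symm_apply_apply, Fin.cases_succ, eval_sub, eval_X, eval_C,
      conjTuple_apply_castAdd_natAdd, add_sub_cancel_right]
    rfl

theorem Nat.exists_add_eq_and_mul_eq_sq_div_four (n : ℕ) :
    ∃ p q, n = p + q ∧ q ≤ p ∧ p * q = n ^ 2 / 4 := by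
  refine ⟨n - n / 2, n / 2, by omega, by omega, ?_⟩
  obtain ⟨c, rfl | rfl⟩ := Nat.even_or_odd' n
  · rw [show 2 * c - 2 * c / 2 = c by omega, show 2 * c / 2 = c by omega,
      show (2 * c) ^ 2 = c * c * 4 by ring, Nat.mul_div_cancel _ (by norm_num)]
  · rw [show 2 * c + 1 - (2 * c + 1) / 2 = c + 1 by omega, show (2 * c + 1) / 2 = c by omega,
      show (2 * c + 1) ^ 2 = 1 + (c + 1) * c * 4 by ring, Nat.add_mul_div_right _ _ (by norm_num)]
    norm_num

theorem dim_nilCommTuples_ge_general (k : Type*) [Field k] [IsAlgClosed k]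
    (n r : ℕ) (hr : 2 ≤ r) :
    letI := matTupleZariski k n r
    (((r + 1) * (n ^ 2 / 4) : ℕ) : WithBot ℕ∞)
      ≤ topologicalKrullDim (nilCommTuples k n r) := by
  obtain ⟨p, q, rfl, hqp, hpq⟩ := Nat.exists_add_eq_and_mul_eq_sq_div_four n
  rw [← hpq]
  exact le_topologicalKrullDim_nilCommTuples k hqp (by omega)

/-- For all integers `n, r ≥ 2`, `dim C_r(N_n) ≥ (r+1)·⌊n²/4⌋`. -/
theorem dim_nilCommTuples_ge (k : Type*) [Field k] [IsAlgClosed k]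
    (n r : ℕ) (hn : 2 ≤ n) (hr : 2 ≤ r) :
    letI := matTupleZariski k n r
    (((r + 1) * (n ^ 2 / 4) : ℕ) : WithBot ℕ∞)
      ≤ topologicalKrullDim (nilCommTuples k n r) :=
  dim_nilCommTuples_ge_general k n r hr
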